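/- arXiv:1106.5198 — 2 statements merged into one kernel-verified Lean document; each statement's English description precedes it below -/
import Mathlib

section
/- Let S be an inverse semigroup and let T be a closed inverse subsemigroup of S. Then T is directed if and only if there exists a filter F in E(S) such that T = F↑. -/
namespace InvSgpPaper

/-- `inv` makes the semigroup `S` an inverse semigroup: `a * inv a * a = a`,
`inv a * a * inv a = inv a`, and all idempotents commute. -/
structure IsInvSgp (S : Type*) [Semigroup S] (inv : S → S) : Prop where
  mul_inv_mul : ∀ a : S, a * inv a * a = a
  inv_mul_inv : ∀ a : S, inv a * a * inv a = inv a
  idem_comm : ∀ e f : S, e * e = e → f * f = f → e * f = f * e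

section Defs

variable {S X Y : Type*} [Semigroup S]

/-- The natural partial order on an inverse semigroup:
`a ≤ b` iff `a = e * b` for some idempotent `e`. -/
def nle (a b : S) : Prop := ∃ e : S, e * e = e ∧ a = e * b

/-- The upward closure `A↑` of a subset `A`. -/
def up (A : Set S) : Set S := {s : S | ∃ a ∈ A, nle a s}

/-- A closed inverse subsemigroup: closed under multiplication, under `inv`,
and upward closed (`H = H↑`). -/
def IsClosedInvSub (inv : S → S) (H : Set S) : Prop :=
  (∀ a ∈ H, ∀ b ∈ H, a * b ∈ H) ∧ (∀ a ∈ H, inv a ∈ H) ∧ up H = H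

/-- The left coset `(sH)↑ = {x | s * h ≤ x for some h ∈ H}`. -/
def lcoset (s : S) (H : Set S) : Set S := {x : S | ∃ h ∈ H, nle (s * h) x}

/-- The set of idempotents of a subset `A`. -/
def idemSet (A : Set S) : Set S := {e ∈ A | e * e = e}

/-- A filter in `E(S)`: a nonempty set of idempotents closed under
multiplication and upward closed within `E(S)`. -/
def IsFilterE (F : Set S) : Prop :=
  F.Nonempty ∧ (∀ e ∈ F, e * e = e) ∧ (∀ e ∈ F, ∀ f ∈ F, e * f ∈ F) ∧
    (∀ e ∈ F, ∀ f : S, f * f = f → nle e f → f ∈ F)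

/-- `F̄ = {s ∈ S : ∀ f ∈ F, inv s * f * s ∈ F ∧ s * f * inv s ∈ F}`. -/
def fbar (inv : S → S) (F : Set S) : Set S :=
  {s : S | ∀ f ∈ F, inv s * f * s ∈ F ∧ s * f * inv s ∈ F}

/-- The minimum group congruence `σ`: `a σ b` iff some `c` satisfies `c ≤ a` and `c ≤ b`. -/
def sigmaRel (a b : S) : Prop := ∃ c : S, nle c a ∧ nle c b

/-- The elementwise product of two subsets. -/
def setMul (A B : Set S) : Set S := {x : S | ∃ a ∈ A, ∃ b ∈ B, x = a * b}

/-- The elementwise inverse `A⁻¹` of a subset. -/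
def setInv (inv : S → S) (A : Set S) : Set S := inv '' A

/-- An atlas: a subset `A` with `A·A⁻¹·A = A`. -/
def IsAtlas (inv : S → S) (A : Set S) : Prop := setMul (setMul A (setInv inv A)) A = A

/-- A (down-)directed subset: nonempty, and any two elements have a common
lower bound inside it. -/
def IsDirectedSet (A : Set S) : Prop :=
  A.Nonempty ∧ ∀ a ∈ A, ∀ b ∈ A, ∃ c ∈ A, nle c a ∧ nle c b

/-- An action of `S` on `X` by partial maps, axioms (A1) and (A2). -/
def IsAction (act : S → X → Option X) : Prop :=
  (∀ e : S, e * e = e → ∀ x y : X, act e x = some y → y = x) ∧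
    (∀ (s t : S) (x : X), act (s * t) x = (act t x).bind (act s))

/-- Transitivity of an action. -/
def IsTransitiveAct (act : S → X → Option X) : Prop :=
  ∀ x y : X, ∃ s : S, act s x = some y

/-- Effectiveness of an action: every point is in the domain of some element. -/
def IsEffectiveAct (act : S → X → Option X) : Prop :=
  ∀ x : X, ∃ (s : S) (x' : X), act s x = some x'

/-- The stabilizer of a point. -/
def stab (act : S → X → Option X) (x : X) : Set S := {s : S | act s x = some x}

/-- A morphism of `S`-actions. -/
def IsMorphism (actX : S → X → Option X) (actY : S → Y → Option Y) (α : X → Y) : Prop :=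
  ∀ (s : S) (x x' : X), actX s x = some x' → actY s (α x) = some (α x')

/-- A strong morphism of `S`-actions. -/
def IsStrongMorphism (actX : S → X → Option X) (actY : S → Y → Option Y)
    (α : X → Y) : Prop :=
  IsMorphism actX actY α ∧
    ∀ (s : S) (x : X) (y' : Y), actY s (α x) = some y' → ∃ x' : X, actX s x = some x'

end Defs

/-! In a directed closed inverse subsemigroup `T`, every `s ∈ T` lies above an idempotent of `T`:
a common lower bound of `s` and the idempotent `s * inv s` is again idempotent. Hence `T` is the up-closure of the filter `E(T)`. Conversely, the up-closure of a
filter is directed, as `e * f` lies below both `e` and `f`. -/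

section

variable {S : Type*} [Semigroup S] {inv : S → S}

theorem IsInvSgp.isIdempotentElem_mul_inv (hS : IsInvSgp S inv) (a : S) :
    IsIdempotentElem (a * inv a) := by
  rw [IsIdempotentElem, ← mul_assoc, hS.mul_inv_mul]

theorem IsInvSgp.isIdempotentElem_mul (hS : IsInvSgp S inv) {e f : S}
    (he : IsIdempotentElem e) (hf : IsIdempotentElem f) : IsIdempotentElem (e * f) :=
  he.mul_of_commute (hS.idem_comm e f he hf) hf

theorem IsInvSgp.nle_refl (hS : IsInvSgp S inv) (a : S) : nle a a :=
  ⟨a * inv a, hS.isIdempotentElem_mul_inv a, (hS.mul_inv_mul a).symm⟩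

theorem IsInvSgp.nle_trans (hS : IsInvSgp S inv) {a b c : S} (hab : nle a b) (hbc : nle b c) :
    nle a c := by
  obtain ⟨e, he, rfl⟩ := hab
  obtain ⟨f, hf, rfl⟩ := hbc
  exact ⟨e * f, hS.isIdempotentElem_mul he hf, (mul_assoc e f c).symm⟩

theorem IsInvSgp.isIdempotentElem_of_nle (hS : IsInvSgp S inv) {a e : S} (hae : nle a e)
    (he : IsIdempotentElem e) : IsIdempotentElem a := by
  obtain ⟨f, hf, rfl⟩ := hae
  exact hS.isIdempotentElem_mul hf he

theorem IsInvSgp.mul_nle_left (hS : IsInvSgp S inv) {e f : S} (he : IsIdempotentElem e)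
    (hf : IsIdempotentElem f) : nle (e * f) e :=
  ⟨f, hf, hS.idem_comm e f he hf⟩

theorem mul_nle_right {e f : S} (he : IsIdempotentElem e) : nle (e * f) f :=
  ⟨e, he, rfl⟩

theorem up_mono {A B : Set S} (hAB : A ⊆ B) : up A ⊆ up B :=
  fun _ ⟨a, ha, has⟩ => ⟨a, hAB ha, has⟩

theorem IsInvSgp.subset_up (hS : IsInvSgp S inv) (A : Set S) : A ⊆ up A :=
  fun a ha => ⟨a, ha, hS.nle_refl a⟩

theorem idemSet_subset (A : Set S) : idemSet A ⊆ A :=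
  fun _ h => h.1

theorem IsInvSgp.isFilterE_idemSet (hS : IsInvSgp S inv) {T : Set S}
    (hT : IsClosedInvSub inv T) (hne : T.Nonempty) : IsFilterE (idemSet T) := by
  obtain ⟨hmul, hinv, hup⟩ := hT
  obtain ⟨a, ha⟩ := hne
  refine ⟨⟨a * inv a, hmul a ha _ (hinv a ha), hS.isIdempotentElem_mul_inv a⟩,
    fun e he => he.2, fun e he f hf => ⟨hmul e he.1 f hf.1, hS.isIdempotentElem_mul he.2 hf.2⟩,
    fun e he f hf hef => ⟨?_, hf⟩⟩
  rw [← hup]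
  exact ⟨e, he.1, hef⟩

theorem IsInvSgp.up_idemSet_eq (hS : IsInvSgp S inv) {T : Set S}
    (hT : IsClosedInvSub inv T) (hdir : IsDirectedSet T) : up (idemSet T) = T := by
  obtain ⟨hmul, hinv, hup⟩ := hT
  refine subset_antisymm ((up_mono (idemSet_subset T)).trans hup.subset) fun s hs => ?_
  obtain ⟨c, hc, hcs, hc_le⟩ := hdir.2 s hs (s * inv s) (hmul s hs _ (hinv s hs))
  exact ⟨c, ⟨hc, hS.isIdempotentElem_of_nle hc_le (hS.isIdempotentElem_mul_inv s)⟩, hcs⟩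

theorem IsInvSgp.isDirectedSet_up (hS : IsInvSgp S inv) {F : Set S} (hF : IsFilterE F) :
    IsDirectedSet (up F) := by
  obtain ⟨hne, hidem, hmul, -⟩ := hF
  refine ⟨hne.mono (hS.subset_up F), fun a ⟨e, he, hea⟩ b ⟨f, hf, hfb⟩ => ?_⟩
  refine ⟨e * f, hS.subset_up F (hmul e he f hf), ?_, ?_⟩
  · exact hS.nle_trans (hS.mul_nle_left (hidem e he) (hidem f hf)) hea
  · exact hS.nle_trans (mul_nle_right (hidem e he)) hfb

end

/-- A closed inverse subsemigroup `T` is directed iff `T = F↑` for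
some filter `F` in `E(S)`. -/
theorem stmt14 {S : Type*} [Semigroup S] (inv : S → S) (hS : IsInvSgp S inv)
    (T : Set S) (hT : IsClosedInvSub inv T) :
    IsDirectedSet T ↔ ∃ F : Set S, IsFilterE F ∧ T = up F := by
  constructor
  · intro hdir
    exact ⟨idemSet T, hS.isFilterE_idemSet hT hdir.1, (hS.up_idemSet_eq hT hdir).symm⟩
  · rintro ⟨F, hF, rfl⟩
    exact hS.isDirectedSet_up hF

end InvSgpPaper
end

section
/- Let S be an inverse semigroup and let A be a nonempty closed atlas in S. Define a relation ∼ on A by a ∼ b iff there exists c ∈ A with c ≤ a and c ≤ b. Then ∼ is an equivalence relation on A, and every equivalence class of ∼ is a closed directed atlas. Moreover, any two equivalence classes C and C' satisfy (C⁻¹·C)↑ = (C'⁻¹·C')↑ and (C·C⁻¹)↑ = (C'·C'⁻¹)↑. -/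
/-! If `c, d ∈ A` lie below a common element, then `c * c⁻¹ * d` is a common lower bound, and it
lies in `A` because `A·A⁻¹·A ⊆ A`; this gives transitivity of `∼` and directedness of its classes.
A closed directed set `C` is an atlas: for `x, y, z ∈ C` with common lower bound `d ∈ C`,
`d = d * d⁻¹ * d ≤ x * y⁻¹ * z`. For the domains, every `x⁻¹ * y` with `x, y` in one class lies
above `c⁻¹ * c` for a common lower bound `c`, while `w = b * (c⁻¹ * c) ∈ A` lies in the class of
`b` and satisfies `w⁻¹ * w ≤ c⁻¹ * c`; ranges are handled symmetrically with `(c * c⁻¹) * b`. -/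

namespace InvSgpPaper

namespace IsInvSgp

variable {S : Type*} [Semigroup S] {inv : S → S}

theorem commute (hS : IsInvSgp S inv) {e f : S} (he : IsIdempotentElem e)
    (hf : IsIdempotentElem f) : Commute e f :=
  hS.idem_comm e f he hf

theorem isIdempotentElem_mul_inv_s16 (hS : IsInvSgp S inv) (a : S) :
    IsIdempotentElem (a * inv a) := by
  rw [IsIdempotentElem, ← mul_assoc, hS.mul_inv_mul]

theorem isIdempotentElem_inv_mul (hS : IsInvSgp S inv) (a : S) :
    IsIdempotentElem (inv a * a) := by
  rw [IsIdempotentElem, mul_assoc, ← mul_assoc a, hS.mul_inv_mul]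

theorem isIdempotentElem_conj (hS : IsInvSgp S inv) (b : S) {f : S}
    (hf : IsIdempotentElem f) : IsIdempotentElem (b * f * inv b) := by
  have hc := hS.commute hf (hS.isIdempotentElem_inv_mul b)
  calc (b * f * inv b) * (b * f * inv b)
      = b * (f * (inv b * b)) * (f * inv b) := by simp only [mul_assoc]
    _ = (b * inv b * b) * ((f * f) * inv b) := by rw [hc.eq]; simp only [mul_assoc]
    _ = b * f * inv b := by rw [hS.mul_inv_mul, hf.eq, ← mul_assoc]

theorem inv_unique (hS : IsInvSgp S inv) {a x y : S} (h1 : a * x * a = a) (h2 : x * a * x = x)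
    (h3 : a * y * a = a) (h4 : y * a * y = y) : x = y := by
  have hax : IsIdempotentElem (a * x) := by rw [IsIdempotentElem, ← mul_assoc, h1]
  have hay : IsIdempotentElem (a * y) := by rw [IsIdempotentElem, ← mul_assoc, h3]
  have hxa : IsIdempotentElem (x * a) := by rw [IsIdempotentElem, ← mul_assoc, h2]
  have hya : IsIdempotentElem (y * a) := by rw [IsIdempotentElem, ← mul_assoc, h4]
  calc x = x * (a * y * a) * x := by rw [h3, h2]
    _ = x * ((a * y) * (a * x)) := by simp only [mul_assoc]
    _ = (x * a * x) * (a * y) := by rw [(hS.commute hay hax).eq]; simp only [mul_assoc]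
    _ = x * a * (y * a * y) := by rw [h2, h4, mul_assoc]
    _ = ((x * a) * (y * a)) * y := by simp only [mul_assoc]
    _ = y * (a * x * a) * y := by rw [(hS.commute hxa hya).eq]; simp only [mul_assoc]
    _ = y := by rw [h1, h4]

theorem inv_inv (hS : IsInvSgp S inv) (a : S) : inv (inv a) = a :=
  hS.inv_unique (hS.mul_inv_mul (inv a)) (hS.inv_mul_inv (inv a)) (hS.inv_mul_inv a)
    (hS.mul_inv_mul a)

theorem inv_of_isIdempotentElem (hS : IsInvSgp S inv) {e : S} (he : IsIdempotentElem e) :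
    inv e = e :=
  hS.inv_unique (hS.mul_inv_mul e) (hS.inv_mul_inv e) (by rw [he.eq, he.eq])
    (by rw [he.eq, he.eq])

theorem inv_mul (hS : IsInvSgp S inv) (a b : S) : inv (a * b) = inv b * inv a := by
  have hc := hS.commute (hS.isIdempotentElem_mul_inv_s16 b) (hS.isIdempotentElem_inv_mul a)
  refine hS.inv_unique (hS.mul_inv_mul (a * b)) (hS.inv_mul_inv (a * b)) ?_ ?_
  · calc (a * b) * (inv b * inv a) * (a * b)
        = a * ((b * inv b) * (inv a * a)) * b := by simp only [mul_assoc]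
      _ = (a * inv a * a) * ((b * inv b) * b) := by rw [hc.eq]; simp only [mul_assoc]
      _ = a * b := by rw [hS.mul_inv_mul a, hS.mul_inv_mul b]
  · calc (inv b * inv a) * (a * b) * (inv b * inv a)
        = inv b * ((inv a * a) * (b * inv b)) * inv a := by simp only [mul_assoc]
      _ = (inv b * b * inv b) * ((inv a * a) * inv a) := by rw [← hc.eq]; simp only [mul_assoc]
      _ = inv b * inv a := by rw [hS.inv_mul_inv b, hS.inv_mul_inv a]

theorem nle_refl_s16 (hS : IsInvSgp S inv) (a : S) : nle a a :=
  ⟨a * inv a, hS.isIdempotentElem_mul_inv_s16 a, (hS.mul_inv_mul a).symm⟩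

theorem nle_trans_s16 (hS : IsInvSgp S inv) {a b c : S} (hab : nle a b) (hbc : nle b c) :
    nle a c := by
  obtain ⟨e, he, rfl⟩ := hab
  obtain ⟨f, hf, rfl⟩ := hbc
  exact ⟨e * f, IsIdempotentElem.mul_of_commute (hS.commute he hf) he hf, (mul_assoc e f c).symm⟩

theorem mul_idem_nle (hS : IsInvSgp S inv) (b : S) {f : S} (hf : IsIdempotentElem f) :
    nle (b * f) b := by
  refine ⟨b * f * inv b, hS.isIdempotentElem_conj b hf, ?_⟩
  calc b * f = (b * inv b * b) * f := by rw [hS.mul_inv_mul]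
    _ = b * ((inv b * b) * f) := by simp only [mul_assoc]
    _ = b * (f * (inv b * b)) := by rw [(hS.commute hf (hS.isIdempotentElem_inv_mul b)).eq]
    _ = (b * f * inv b) * b := by simp only [mul_assoc]

theorem mul_nle_mul_right {a b : S} (h : nle a b) (c : S) : nle (a * c) (b * c) := by
  obtain ⟨e, he, rfl⟩ := h
  exact ⟨e, he, mul_assoc e b c⟩

theorem mul_nle_mul_left (hS : IsInvSgp S inv) (b : S) {c d : S} (h : nle c d) :
    nle (b * c) (b * d) := by
  obtain ⟨f, hf, rfl⟩ := h
  refine ⟨b * f * inv b, hS.isIdempotentElem_conj b hf, ?_⟩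
  calc b * (f * d) = (b * inv b * b) * (f * d) := by rw [hS.mul_inv_mul]
    _ = b * ((inv b * b) * f) * d := by simp only [mul_assoc]
    _ = b * (f * (inv b * b)) * d := by rw [(hS.commute hf (hS.isIdempotentElem_inv_mul b)).eq]
    _ = (b * f * inv b) * (b * d) := by simp only [mul_assoc]

theorem mul_nle_mul (hS : IsInvSgp S inv) {a b c d : S} (hab : nle a b) (hcd : nle c d) :
    nle (a * c) (b * d) :=
  hS.nle_trans_s16 (mul_nle_mul_right hab c) (hS.mul_nle_mul_left b hcd)

theorem inv_nle_inv (hS : IsInvSgp S inv) {a b : S} (h : nle a b) : nle (inv a) (inv b) := by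
  obtain ⟨e, he, rfl⟩ := h
  rw [hS.inv_mul, hS.inv_of_isIdempotentElem he]
  simpa only [hS.inv_inv] using hS.mul_idem_nle (inv b) he

theorem mul_inv_mul_of_nle (hS : IsInvSgp S inv) {c b : S} (h : nle c b) :
    c * inv c * b = c := by
  obtain ⟨e, he, rfl⟩ := h
  rw [hS.inv_mul, hS.inv_of_isIdempotentElem he]
  calc e * b * (inv b * e) * b = e * ((b * inv b) * e) * b := by simp only [mul_assoc]
    _ = (e * e) * (b * inv b * b) := by
      rw [← (hS.commute he (hS.isIdempotentElem_mul_inv_s16 b)).eq]; simp only [mul_assoc]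
    _ = e * b := by rw [he, hS.mul_inv_mul]

theorem mul_inv_mul_nle_of_nle (hS : IsInvSgp S inv) {b c d : S} (hcb : nle c b)
    (hdb : nle d b) : nle (c * inv c * d) c ∧ nle (c * inv c * d) d := by
  refine ⟨?_, c * inv c, hS.isIdempotentElem_mul_inv_s16 c, rfl⟩
  obtain ⟨f, hf, rfl⟩ := hdb
  refine ⟨f, hf, ?_⟩
  calc c * inv c * (f * b) = (c * inv c * f) * b := by simp only [mul_assoc]
    _ = f * (c * inv c * b) := by
      rw [(hS.commute (hS.isIdempotentElem_mul_inv_s16 c) hf).eq]; simp only [mul_assoc]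
    _ = f * c := by rw [hS.mul_inv_mul_of_nle hcb]

theorem inv_mul_self_nle_of_mul_idem (hS : IsInvSgp S inv) (s : S) {e : S}
    (he : IsIdempotentElem e) : nle (inv (s * e) * (s * e)) e := by
  refine ⟨inv s * s, hS.isIdempotentElem_inv_mul s, ?_⟩
  have hc := hS.commute he (hS.isIdempotentElem_inv_mul s)
  calc inv (s * e) * (s * e) = e * ((inv s * s) * e) := by
        rw [hS.inv_mul, hS.inv_of_isIdempotentElem he]; simp only [mul_assoc]
    _ = inv s * s * e := by rw [← hc.eq, ← mul_assoc, he.eq, hc.eq]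

theorem mul_inv_self_nle_of_idem_mul (hS : IsInvSgp S inv) (s : S) {e : S}
    (he : IsIdempotentElem e) : nle ((e * s) * inv (e * s)) e := by
  refine ⟨s * inv s, hS.isIdempotentElem_mul_inv_s16 s, ?_⟩
  have hc := hS.commute he (hS.isIdempotentElem_mul_inv_s16 s)
  calc (e * s) * inv (e * s) = e * ((s * inv s) * e) := by
        rw [hS.inv_mul, hS.inv_of_isIdempotentElem he]; simp only [mul_assoc]
    _ = s * inv s * e := by rw [← hc.eq, ← mul_assoc, he.eq, hc.eq]

theorem up_eq_self (hS : IsInvSgp S inv) {B : Set S} (h : ∀ b ∈ B, ∀ s, nle b s → s ∈ B) :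
    up B = B :=
  Set.Subset.antisymm (fun _ ⟨b, hb, hbs⟩ => h b hb _ hbs) fun s hs => ⟨s, hs, hS.nle_refl_s16 s⟩

theorem up_subset_up (hS : IsInvSgp S inv) {B B' : Set S} (h : ∀ x ∈ B, ∃ y ∈ B', nle y x) :
    up B ⊆ up B' := by
  rintro s ⟨x, hx, hxs⟩
  obtain ⟨y, hy, hyx⟩ := h x hx
  exact ⟨y, hy, hS.nle_trans_s16 hyx hxs⟩

theorem isAtlas_of_isDirectedSet (hS : IsInvSgp S inv) {C : Set S} (hdir : IsDirectedSet C)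
    (hup : up C = C) : IsAtlas inv C := by
  refine Set.Subset.antisymm ?_ fun t ht =>
    ⟨t * inv t, ⟨t, ht, inv t, ⟨t, ht, rfl⟩, rfl⟩, t, ht, (hS.mul_inv_mul t).symm⟩
  rintro _ ⟨_, ⟨x, hx, _, ⟨y, hy, rfl⟩, rfl⟩, z, hz, rfl⟩
  obtain ⟨c, hc, hcx, hcy⟩ := hdir.2 x hx y hy
  obtain ⟨d, hd, hdc, hdz⟩ := hdir.2 c hc z hz
  have hle := hS.mul_nle_mul (hS.mul_nle_mul (hS.nle_trans_s16 hdc hcx)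
    (hS.inv_nle_inv (hS.nle_trans_s16 hdc hcy))) hdz
  rw [hS.mul_inv_mul] at hle
  exact hup ▸ ⟨d, hd, hle⟩

end IsInvSgp

namespace IsAtlas

variable {S : Type*} [Semigroup S] {inv : S → S} {A : Set S}

theorem mul_inv_mul_mem (hA : IsAtlas inv A) {x y z : S} (hx : x ∈ A) (hy : y ∈ A)
    (hz : z ∈ A) : x * inv y * z ∈ A :=
  hA ▸ ⟨x * inv y, ⟨x, hx, inv y, ⟨y, hy, rfl⟩, rfl⟩, z, hz, rfl⟩

theorem exists_mem_nle_nle (hA : IsAtlas inv A) (hS : IsInvSgp S inv) {b c d : S}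
    (hc : c ∈ A) (hd : d ∈ A) (hcb : nle c b) (hdb : nle d b) :
    ∃ m ∈ A, nle m c ∧ nle m d :=
  ⟨c * inv c * d, hA.mul_inv_mul_mem hc hc hd, hS.mul_inv_mul_nle_of_nle hcb hdb⟩

end IsAtlas

section SigmaIn

variable {S : Type*} [Semigroup S] {inv : S → S} {A : Set S}

/-- The relation `∼` of the statement. -/
def sigmaIn (A : Set S) (a b : S) : Prop := ∃ c ∈ A, nle c a ∧ nle c b

def sigmaClass (A : Set S) (a : S) : Set S := {b ∈ A | sigmaIn A a b}

theorem sigmaIn_refl (hS : IsInvSgp S inv) {a : S} (ha : a ∈ A) : sigmaIn A a a :=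
  ⟨a, ha, hS.nle_refl_s16 a, hS.nle_refl_s16 a⟩

theorem sigmaIn_symm {a b : S} : sigmaIn A a b → sigmaIn A b a
  | ⟨c, hc, hca, hcb⟩ => ⟨c, hc, hcb, hca⟩

theorem sigmaIn_trans (hS : IsInvSgp S inv) (hA : IsAtlas inv A) {a b c : S}
    (hab : sigmaIn A a b) (hbc : sigmaIn A b c) : sigmaIn A a c := by
  obtain ⟨d, hd, hda, hdb⟩ := hab
  obtain ⟨d', hd', hd'b, hd'c⟩ := hbc
  obtain ⟨m, hm, hmd, hmd'⟩ := hA.exists_mem_nle_nle hS hd hd' hdb hd'b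
  exact ⟨m, hm, hS.nle_trans_s16 hmd hda, hS.nle_trans_s16 hmd' hd'c⟩

theorem mem_sigmaClass_of_nle (hS : IsInvSgp S inv) {a c : S} (hc : c ∈ A) (hca : nle c a) :
    c ∈ sigmaClass A a :=
  ⟨hc, c, hc, hca, hS.nle_refl_s16 c⟩

theorem exists_nle_nle_of_mem_sigmaClass (hS : IsInvSgp S inv) (hA : IsAtlas inv A)
    {a x y : S} (hx : x ∈ sigmaClass A a) (hy : y ∈ sigmaClass A a) :
    ∃ c ∈ sigmaClass A a, nle c x ∧ nle c y := by
  obtain ⟨-, d, hd, hda, hdx⟩ := hx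
  obtain ⟨-, d', hd', hd'a, hd'y⟩ := hy
  obtain ⟨m, hm, hmd, hmd'⟩ := hA.exists_mem_nle_nle hS hd hd' hda hd'a
  exact ⟨m, mem_sigmaClass_of_nle hS hm (hS.nle_trans_s16 hmd hda), hS.nle_trans_s16 hmd hdx,
    hS.nle_trans_s16 hmd' hd'y⟩

theorem isDirectedSet_sigmaClass (hS : IsInvSgp S inv) (hA : IsAtlas inv A) {a : S}
    (ha : a ∈ A) : IsDirectedSet (sigmaClass A a) :=
  ⟨⟨a, ha, sigmaIn_refl hS ha⟩, fun _ hx _ hy => exists_nle_nle_of_mem_sigmaClass hS hA hx hy⟩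

theorem up_sigmaClass (hS : IsInvSgp S inv) (hcl : up A = A) (a : S) :
    up (sigmaClass A a) = sigmaClass A a :=
  hS.up_eq_self fun _ ⟨hb, c, hc, hca, hcb⟩ _ hbs =>
    ⟨hcl ▸ ⟨_, hb, hbs⟩, c, hc, hca, hS.nle_trans_s16 hcb hbs⟩

theorem up_inv_mul_sigmaClass_subset (hS : IsInvSgp S inv) (hA : IsAtlas inv A) (a : S)
    {b : S} (hb : b ∈ A) :
    up (setMul (setInv inv (sigmaClass A a)) (sigmaClass A a)) ⊆
      up (setMul (setInv inv (sigmaClass A b)) (sigmaClass A b)) := by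
  refine hS.up_subset_up ?_
  rintro _ ⟨_, ⟨x, hx, rfl⟩, y, hy, rfl⟩
  obtain ⟨c, hc, hcx, hcy⟩ := exists_nle_nle_of_mem_sigmaClass hS hA hx hy
  have hidem := hS.isIdempotentElem_inv_mul c
  have hw : b * (inv c * c) ∈ sigmaClass A b :=
    mem_sigmaClass_of_nle hS (mul_assoc b (inv c) c ▸ hA.mul_inv_mul_mem hb hc.1 hc.1)
      (hS.mul_idem_nle b hidem)
  exact ⟨_, ⟨_, ⟨_, hw, rfl⟩, _, hw, rfl⟩,
    hS.nle_trans_s16 (hS.inv_mul_self_nle_of_mul_idem b hidem)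
      (hS.mul_nle_mul (hS.inv_nle_inv hcx) hcy)⟩

theorem up_mul_inv_sigmaClass_subset (hS : IsInvSgp S inv) (hA : IsAtlas inv A) (a : S)
    {b : S} (hb : b ∈ A) :
    up (setMul (sigmaClass A a) (setInv inv (sigmaClass A a))) ⊆
      up (setMul (sigmaClass A b) (setInv inv (sigmaClass A b))) := by
  refine hS.up_subset_up ?_
  rintro _ ⟨x, hx, _, ⟨y, hy, rfl⟩, rfl⟩
  obtain ⟨c, hc, hcx, hcy⟩ := exists_nle_nle_of_mem_sigmaClass hS hA hx hy
  have hidem := hS.isIdempotentElem_mul_inv_s16 c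
  have hw : c * inv c * b ∈ sigmaClass A b :=
    mem_sigmaClass_of_nle hS (hA.mul_inv_mul_mem hc.1 hc.1 hb) ⟨_, hidem, rfl⟩
  exact ⟨_, ⟨_, hw, _, ⟨_, hw, rfl⟩, rfl⟩,
    hS.nle_trans_s16 (hS.mul_inv_self_nle_of_idem_mul b hidem)
      (hS.mul_nle_mul hcx (hS.inv_nle_inv hcy))⟩

end SigmaIn

theorem stmt16_general {S : Type*} [Semigroup S] (inv : S → S) (hS : IsInvSgp S inv)
    (A : Set S) (hcl : up A = A) (hatlas : IsAtlas inv A)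
    (sim : S → S → Prop) (hsim : ∀ a b : S, sim a b ↔ ∃ c ∈ A, nle c a ∧ nle c b)
    (cls : S → Set S) (hcls : ∀ a : S, cls a = {b ∈ A | sim a b}) :
    -- equivalence relation on A
    (∀ a ∈ A, sim a a) ∧
    (∀ a ∈ A, ∀ b ∈ A, sim a b → sim b a) ∧
    (∀ a ∈ A, ∀ b ∈ A, ∀ c ∈ A, sim a b → sim b c → sim a c) ∧
    -- each class is a closed directed atlas
    (∀ a ∈ A, up (cls a) = cls a ∧ IsDirectedSet (cls a) ∧ IsAtlas inv (cls a)) ∧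
    -- any two classes have the same domain and range idempotents
    (∀ a ∈ A, ∀ b ∈ A,
      up (setMul (setInv inv (cls a)) (cls a)) = up (setMul (setInv inv (cls b)) (cls b)) ∧
      up (setMul (cls a) (setInv inv (cls a))) = up (setMul (cls b) (setInv inv (cls b)))) := by
  obtain rfl : sim = sigmaIn A := funext₂ fun a b => propext (hsim a b)
  obtain rfl : cls = sigmaClass A := funext hcls
  refine ⟨fun a ha => sigmaIn_refl hS ha, fun _ _ _ _ => sigmaIn_symm,
    fun _ _ _ _ _ _ => sigmaIn_trans hS hatlas, fun a ha => ?_, fun a ha b hb => ?_⟩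
  · have hdir := isDirectedSet_sigmaClass hS hatlas ha
    have hup := up_sigmaClass hS hcl a
    exact ⟨hup, hdir, hS.isAtlas_of_isDirectedSet hdir hup⟩
  · exact ⟨(up_inv_mul_sigmaClass_subset hS hatlas a hb).antisymm
        (up_inv_mul_sigmaClass_subset hS hatlas b ha),
      (up_mul_inv_sigmaClass_subset hS hatlas a hb).antisymm
        (up_mul_inv_sigmaClass_subset hS hatlas b ha)⟩

/-- On a nonempty closed atlas `A`, the relation
`a ∼ b iff ∃ c ∈ A, c ≤ a ∧ c ≤ b` is an equivalence relation, its classes are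
closed directed atlases, and any two classes `C, C'` satisfy
`(C⁻¹·C)↑ = (C'⁻¹·C')↑` and `(C·C⁻¹)↑ = (C'·C'⁻¹)↑`. -/
theorem stmt16 {S : Type*} [Semigroup S] (inv : S → S) (hS : IsInvSgp S inv)
    (A : Set S) (hne : A.Nonempty) (hcl : up A = A) (hatlas : IsAtlas inv A)
    (sim : S → S → Prop) (hsim : ∀ a b : S, sim a b ↔ ∃ c ∈ A, nle c a ∧ nle c b)
    (cls : S → Set S) (hcls : ∀ a : S, cls a = {b ∈ A | sim a b}) :
    -- equivalence relation on A
    (∀ a ∈ A, sim a a) ∧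
    (∀ a ∈ A, ∀ b ∈ A, sim a b → sim b a) ∧
    (∀ a ∈ A, ∀ b ∈ A, ∀ c ∈ A, sim a b → sim b c → sim a c) ∧
    -- each class is a closed directed atlas
    (∀ a ∈ A, up (cls a) = cls a ∧ IsDirectedSet (cls a) ∧ IsAtlas inv (cls a)) ∧
    -- any two classes have the same domain and range idempotents
    (∀ a ∈ A, ∀ b ∈ A,
      up (setMul (setInv inv (cls a)) (cls a)) = up (setMul (setInv inv (cls b)) (cls b)) ∧
      up (setMul (cls a) (setInv inv (cls a))) = up (setMul (cls b) (setInv inv (cls b)))) :=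
  stmt16_general inv hS A hcl hatlas sim hsim cls hcls

end InvSgpPaper
end
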